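/- arXiv:1702.05217 — 2 statements merged into one kernel-verified Lean document; each statement's English description precedes it below -/
import Mathlib

section
/- In the dynamic programming recursion for PWT, when item e_{ij} is added to a partial solution of weight k - w_{ij}, the change in total benefit equals p_{ij} - R·d_{in}·(1/(v_max - ν k) - 1/(v_max - ν(k - w_{ij}))); i.e., the incremental cost of adding e_{ij} depends only on the item's profit, its weight, the previous total weight, and the remaining distance d_{in}. -/
/-- Weight carried on edge `i` (from city `i` to `i+1`) when the items in `S`
(item `j` located at city `c j`) are selected. -/
noncomputable def pwtLoad (w : ℕ → ℝ) (c : ℕ → ℕ) (S : Finset ℕ) (i : ℕ) : ℝ :=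
  ∑ j ∈ S.filter (fun j => c j ≤ i), w j

/-- Total travel time of the vehicle along the `n` edges with distances `d`,
carrying the items of `S`. -/
noncomputable def pwtT (n : ℕ) (d w : ℕ → ℝ) (c : ℕ → ℕ) (vmax ν : ℝ) (S : Finset ℕ) : ℝ :=
  ∑ i ∈ Finset.range n, d i / (vmax - ν * pwtLoad w c S i)

/-- PWT benefit `B(x) = P(x) - R·T(x)` of the selection `S`. -/
noncomputable def pwtB (n : ℕ) (d p w : ℕ → ℝ) (c : ℕ → ℕ) (vmax ν R : ℝ)
    (S : Finset ℕ) : ℝ :=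
  (∑ j ∈ S, p j) - R * pwtT n d w c vmax ν S

/-! Adding item `j` leaves the load of the edges before city `c j` unchanged; when every
item of `S` sits no later than `c j`, every edge from `c j` on carries all of `S`, so it
carries `∑ S w` before and `∑ S w + w j` after. Hence the travel time of each such edge
`i` changes by `d i` times one and the same difference of reciprocal speeds, and these
changes add up to `d_in` times it. -/

section Load

variable (w : ℕ → ℝ) (c : ℕ → ℕ) {S : Finset ℕ} {i j : ℕ}

theorem pwtLoad_insert_of_lt (hi : i < c j) : pwtLoad w c (insert j S) i = pwtLoad w c S i := by
  rw [pwtLoad, Finset.filter_insert, if_neg hi.not_ge, pwtLoad]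

theorem pwtLoad_insert_of_le (hj : j ∉ S) (hi : c j ≤ i) :
    pwtLoad w c (insert j S) i = w j + pwtLoad w c S i := by
  rw [pwtLoad, Finset.filter_insert, if_pos hi,
    Finset.sum_insert (by simp [hj]), pwtLoad]

theorem pwtLoad_eq_sum_of_forall_le (hS : ∀ a ∈ S, c a ≤ i) :
    pwtLoad w c S i = ∑ a ∈ S, w a := by
  rw [pwtLoad, Finset.filter_true_of_mem hS]

end Load

theorem pwtT_insert_sub (n : ℕ) (d w : ℕ → ℝ) (c : ℕ → ℕ) (vmax ν : ℝ) {S : Finset ℕ}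
    {j : ℕ} (hj : j ∉ S) (horder : ∀ a ∈ S, c a ≤ c j) :
    pwtT n d w c vmax ν (insert j S) - pwtT n d w c vmax ν S =
      (∑ l ∈ Finset.Ico (c j) n, d l) *
        (1 / (vmax - ν * (w j + ∑ a ∈ S, w a)) - 1 / (vmax - ν * ∑ a ∈ S, w a)) := by
  have hIco : Finset.Ico (c j) n = (Finset.range n).filter (c j ≤ ·) := by
    rw [Finset.range_eq_Ico, Finset.Ico_filter_le, Nat.zero_max]
  rw [pwtT, pwtT, ← Finset.sum_sub_distrib, hIco, Finset.sum_filter, Finset.sum_mul]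
  refine Finset.sum_congr rfl fun i _ => ?_
  by_cases hi : c j ≤ i
  · have hload := pwtLoad_eq_sum_of_forall_le w c fun a ha => (horder a ha).trans hi
    rw [if_pos hi, pwtLoad_insert_of_le w c hj hi, hload]
    ring
  · rw [if_neg hi, pwtLoad_insert_of_lt w c (not_le.mp hi), sub_self, zero_mul]

theorem pwtB_insert_sub (n : ℕ) (d p w : ℕ → ℝ) (c : ℕ → ℕ) (vmax ν R : ℝ) {S : Finset ℕ}
    {j : ℕ} (hj : j ∉ S) :
    pwtB n d p w c vmax ν R (insert j S) - pwtB n d p w c vmax ν R S =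
      p j - R * (pwtT n d w c vmax ν (insert j S) - pwtT n d w c vmax ν S) := by
  rw [pwtB, pwtB, Finset.sum_insert hj]
  ring

/-- Incremental benefit in the DP recursion: adding item `j` (located at city
`c j`) to a partial solution `S` of items located no later than `c j`, of total
weight `k - w j`, changes the total benefit by exactly
`p j - R·d_in·(1/(v_max - νk) - 1/(v_max - ν(k - w j)))`, where
`d_in = ∑_{l = c j}^{n-1} d l`; i.e. the incremental cost depends only on the
item's profit, its weight, the previous total weight and the remaining distance. -/
theorem pwt_incremental_benefit (n : ℕ) (d p w : ℕ → ℝ) (c : ℕ → ℕ)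
    (vmax ν R : ℝ) (S : Finset ℕ) (j : ℕ) (hj : j ∉ S)
    (horder : ∀ a ∈ S, c a ≤ c j) (k : ℝ) (hk : (∑ a ∈ S, w a) = k - w j) :
    pwtB n d p w c vmax ν R (insert j S) - pwtB n d p w c vmax ν R S =
      p j - R * (∑ l ∈ Finset.Ico (c j) n, d l) *
        (1 / (vmax - ν * k) - 1 / (vmax - ν * (k - w j))) := by
  rw [pwtB_insert_sub n d p w c vmax ν R hj, pwtT_insert_sub n d w c vmax ν hj horder, hk,
    add_sub_cancel, mul_assoc]
end

section
/- Let x* be an optimal solution for the shifted PWT objective B' with OPT = B'(x*) > 0. Then ∑_{(i,j): x*_{ij}=1} (B(e_{ij}) - B(∅)) ≥ OPT, where B(e_{ij}) is the benefit of packing only item e_{ij}. Consequently, some selected item e_{ij} satisfies B(e_{ij}) - B(∅) ≥ OPT/m, where m is the total number of items. -/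
/-- The shifted objective `B'(x) = B(x) - B(∅)` of a selection `S`. -/
noncomputable def pwtB' (n : ℕ) (d p w : ℕ → ℝ) (c : ℕ → ℕ) (vmax ν R : ℝ)
    (S : Finset ℕ) : ℝ :=
  pwtB n d p w c vmax ν R S - pwtB n d p w c vmax ν R ∅

/-! The map `x ↦ 1 / (v - x)` is convex on `[0, v)`, so its increments grow with the base point:
carrying an item on top of an existing load costs at least as much time as carrying it alone.
Summing this over the items picked up before each edge, the extra travel time of a selection
dominates the sum of the extra travel times of its single items, so the single-item gains
`B'({j})` add up to at least `B'(S)`; averaging over at most `m` items gives the second claim. -/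

open Finset

theorem one_div_sub_add_one_div_sub_le {v a b : ℝ} (ha : 0 ≤ a) (hb : 0 ≤ b) (hab : a + b < v) :
    1 / (v - a) + 1 / (v - b) ≤ 1 / v + 1 / (v - (a + b)) := by
  have hv : 0 < v := by linarith
  have hva : 0 < v - a := by linarith
  have hvb : 0 < v - b := by linarith
  have hvab : 0 < v - (a + b) := by linarith
  rw [div_add_div _ _ hva.ne' hvb.ne', div_add_div _ _ hv.ne' hvab.ne',
    div_le_div_iff₀ (by positivity) (by positivity)]
  nlinarith [mul_nonneg (mul_nonneg ha hb) hvab.le, mul_nonneg (mul_nonneg ha hb) hv.le]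

theorem sum_one_div_sub_sub_le {ι : Type*} {v : ℝ} {s : Finset ι} {x : ι → ℝ}
    (hx : ∀ i ∈ s, 0 ≤ x i) (hs : ∑ i ∈ s, x i < v) :
    ∑ i ∈ s, (1 / (v - x i) - 1 / v) ≤ 1 / (v - ∑ i ∈ s, x i) - 1 / v := by
  classical
  induction s using Finset.induction_on with
  | empty => simp
  | @insert j s hj ih =>
    rw [sum_insert hj] at hs
    rw [sum_insert hj, sum_insert hj]
    have hxj : 0 ≤ x j := hx j (mem_insert_self j s)
    have hxs : ∀ i ∈ s, 0 ≤ x i := fun i hi => hx i (mem_insert_of_mem hi)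
    have hsum := ih hxs (by linarith)
    have hstep := one_div_sub_add_one_div_sub_le hxj (sum_nonneg hxs) hs
    linarith

theorem pwtLoad_singleton (w : ℕ → ℝ) (c : ℕ → ℕ) (j i : ℕ) :
    pwtLoad w c {j} i = if c j ≤ i then w j else 0 := by
  rw [pwtLoad, filter_singleton]
  split_ifs <;> simp

theorem pwtLoad_le_sum {w : ℕ → ℝ} (hw : ∀ j, 0 ≤ w j) (c : ℕ → ℕ) (S : Finset ℕ) (i : ℕ) :
    pwtLoad w c S i ≤ ∑ j ∈ S, w j :=
  sum_le_sum_of_subset_of_nonneg (filter_subset _ S) fun j _ _ => hw j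

section

variable {n : ℕ} {d p w : ℕ → ℝ} {c : ℕ → ℕ} {vmax ν R : ℝ}

theorem pwtT_sub_pwtT_empty (S : Finset ℕ) :
    pwtT n d w c vmax ν S - pwtT n d w c vmax ν ∅ =
      ∑ i ∈ range n, (d i / (vmax - ν * pwtLoad w c S i) - d i / vmax) := by
  simp [pwtT, pwtLoad, sum_sub_distrib]

theorem sum_edge_time_singleton_le {i : ℕ} (hdi : 0 ≤ d i) (hw : ∀ j, 0 ≤ w j) (hν : 0 ≤ ν)
    (S : Finset ℕ) (hcap : ν * pwtLoad w c S i < vmax) :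
    ∑ j ∈ S, (d i / (vmax - ν * pwtLoad w c {j} i) - d i / vmax) ≤
      d i / (vmax - ν * pwtLoad w c S i) - d i / vmax := by
  rw [pwtLoad, mul_sum] at hcap ⊢
  calc ∑ j ∈ S, (d i / (vmax - ν * pwtLoad w c {j} i) - d i / vmax)
      = ∑ j ∈ S with c j ≤ i, d i * (1 / (vmax - ν * w j) - 1 / vmax) := by
        rw [← sum_filter_of_ne (p := fun j => c j ≤ i)]
        · refine sum_congr rfl fun j hj => ?_
          rw [pwtLoad_singleton, if_pos (mem_filter.1 hj).2]
          ring
        · intro j _ hne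
          by_contra hji
          simp [pwtLoad_singleton, hji] at hne
    _ ≤ d i * (1 / (vmax - ∑ j ∈ S with c j ≤ i, ν * w j) - 1 / vmax) := by
        rw [← mul_sum]
        gcongr
        exact sum_one_div_sub_sub_le (fun j _ => mul_nonneg hν (hw j)) hcap
    _ = d i / (vmax - ∑ j ∈ S with c j ≤ i, ν * w j) - d i / vmax := by ring

theorem sum_pwtT_singleton_sub_le (hd : ∀ i, 0 ≤ d i) (hw : ∀ j, 0 ≤ w j) (hν : 0 ≤ ν)
    (S : Finset ℕ) (hcap : ν * ∑ j ∈ S, w j < vmax) :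
    ∑ j ∈ S, (pwtT n d w c vmax ν {j} - pwtT n d w c vmax ν ∅) ≤
      pwtT n d w c vmax ν S - pwtT n d w c vmax ν ∅ := by
  simp_rw [pwtT_sub_pwtT_empty]
  rw [sum_comm]
  refine sum_le_sum fun i _ => sum_edge_time_singleton_le (hd i) hw hν S ?_
  exact (mul_le_mul_of_nonneg_left (pwtLoad_le_sum hw c S i) hν).trans_lt hcap

theorem pwtB'_eq_sum_sub_mul (S : Finset ℕ) :
    pwtB' n d p w c vmax ν R S =
      ∑ j ∈ S, p j - R * (pwtT n d w c vmax ν S - pwtT n d w c vmax ν ∅) := by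
  simp only [pwtB', pwtB, sum_empty]
  ring

theorem pwtB'_le_sum_singleton (hd : ∀ i, 0 ≤ d i) (hw : ∀ j, 0 ≤ w j) (hR : 0 ≤ R)
    (hν : 0 ≤ ν) (S : Finset ℕ) (hcap : ν * ∑ j ∈ S, w j < vmax) :
    pwtB' n d p w c vmax ν R S ≤ ∑ j ∈ S, pwtB' n d p w c vmax ν R {j} := by
  have htime := mul_le_mul_of_nonneg_left
    (sum_pwtT_singleton_sub_le (n := n) (c := c) hd hw hν S hcap) hR
  simp only [pwtB'_eq_sum_sub_mul, sum_singleton]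
  rw [sum_sub_distrib, ← mul_sum]
  linarith

end

theorem exists_div_le_of_le_sum {ι : Type*} {s : Finset ι} {f : ι → ℝ} {a : ℝ} {m : ℕ}
    (ha : 0 < a) (hcard : #s ≤ m) (hsum : a ≤ ∑ i ∈ s, f i) : ∃ i ∈ s, a / m ≤ f i := by
  have hs : s.Nonempty := nonempty_of_sum_ne_zero (f := f) (by linarith)
  have hm : (0 : ℝ) < m := by exact_mod_cast hs.card_pos.trans_le hcard
  refine exists_le_of_sum_le hs ?_
  calc ∑ _i ∈ s, a / m = #s * (a / m) := by rw [sum_const, nsmul_eq_mul]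
    _ ≤ m * (a / m) := by gcongr
    _ = a := by field_simp
    _ ≤ ∑ i ∈ s, f i := hsum

theorem pwt_best_single_item_bound_general (n m : ℕ)
    (d p w : ℕ → ℝ) (c : ℕ → ℕ) (vmax ν R : ℝ)
    (hd : ∀ i, 0 ≤ d i) (hw : ∀ j, 0 ≤ w j) (hR : 0 ≤ R) (hν : 0 ≤ ν)
    (hcap : ν * (∑ j ∈ Finset.range m, w j) < vmax)
    (Sstar : Finset ℕ) (hSsub : Sstar ⊆ Finset.range m)
    (hOPT : 0 < pwtB' n d p w c vmax ν R Sstar) :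
    pwtB' n d p w c vmax ν R Sstar ≤ (∑ j ∈ Sstar, pwtB' n d p w c vmax ν R {j}) ∧
    ∃ j ∈ Sstar, pwtB' n d p w c vmax ν R Sstar / m ≤ pwtB' n d p w c vmax ν R {j} := by
  have hcapS : ν * ∑ j ∈ Sstar, w j < vmax :=
    (mul_le_mul_of_nonneg_left
      (sum_le_sum_of_subset_of_nonneg hSsub fun j _ _ => hw j) hν).trans_lt hcap
  have hsum := pwtB'_le_sum_singleton (p := p) (c := c) (n := n) hd hw hR hν Sstar hcapS
  refine ⟨hsum, exists_div_le_of_le_sum hOPT ?_ hsum⟩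
  simpa using card_le_card hSsub

/-- If `x*` is an optimal solution for the shifted objective `B'` with
`OPT = B'(x*) > 0`, then `∑_{j ∈ x*} B'(e_j) ≥ OPT` (superadditivity of the
single-item gains), and consequently some selected item `e_j` satisfies
`B'(e_j) = B(e_j) - B(∅) ≥ OPT/m`. -/
theorem pwt_best_single_item_bound (n m : ℕ) (hm : 0 < m)
    (d p w : ℕ → ℝ) (c : ℕ → ℕ) (vmax ν R : ℝ)
    (hd : ∀ i, 0 ≤ d i) (hw : ∀ j, 0 ≤ w j) (hR : 0 ≤ R) (hν : 0 ≤ ν)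
    (hvmax : 0 < vmax) (hcap : ν * (∑ j ∈ Finset.range m, w j) < vmax)
    (Sstar : Finset ℕ) (hSsub : Sstar ⊆ Finset.range m)
    (hopt : ∀ S ⊆ Finset.range m,
      pwtB' n d p w c vmax ν R S ≤ pwtB' n d p w c vmax ν R Sstar)
    (hOPT : 0 < pwtB' n d p w c vmax ν R Sstar) :
    pwtB' n d p w c vmax ν R Sstar ≤ (∑ j ∈ Sstar, pwtB' n d p w c vmax ν R {j}) ∧
    ∃ j ∈ Sstar, pwtB' n d p w c vmax ν R Sstar / m ≤ pwtB' n d p w c vmax ν R {j} :=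
  pwt_best_single_item_bound_general n m d p w c vmax ν R hd hw hR hν hcap Sstar hSsub hOPT
end
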